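/- Let ξ₁,…,ξ_K be i.i.d. uniform on [0,D] (D > 0), M̄ a positive integer, d > 0, λ > 0, u ∈ ℝ with ρ = (π D/λ)·u ≠ 0 and sin((π d/λ)·u) ≠ 0. With G = (1/(K·M̄))·Σ_{k,m} exp(i·(2π/λ)·(ξ_k + (m−1)d)·u) and M = sin(M̄φ)/(M̄ sin φ), φ = (π d/λ)·u, we have E[|G|²] = |M|²·(1/K + (1 − 1/K)·(sin ρ/ρ)²). -/

import Mathlib

/-!
The phase of element `(k, m)` is `a ξ_k + 2 m φ` with `a = 2πu/λ`, so `G` factors as the array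
factor `∑_m e^{2imφ}`, whose modulus is `|sin (M̄ φ) / sin φ|` by the geometric sum, times the
mean of the `K` phasors `e^{i a ξ_k}`. For pairwise independent unit phasors with common mean `c`,
`E |∑_k X_k|² = K + K (K - 1) |c|²`: the diagonal terms contribute `1`, the others `|c|²`.
Here `c` is the characteristic function of the uniform law on `[0, D]` at `a`, of modulus
`|sinc (a D / 2)| = |sin ρ / ρ|`.
-/

open MeasureTheory ProbabilityTheory

noncomputable def uniformIcc (D : ℝ) : Measure ℝ :=
  (ENNReal.ofReal D)⁻¹ • (volume.restrict (Set.Icc 0 D))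

open Complex ComplexConjugate

lemma norm_exp_I_mul_two_mul_sub_one (x : ℝ) :
    ‖exp (I * ((2 * x : ℝ) : ℂ)) - 1‖ = 2 * |Real.sin x| := by
  rw [norm_exp_I_mul_ofReal_sub_one, mul_div_cancel_left₀ _ two_ne_zero, norm_mul,
    Real.norm_ofNat, Real.norm_eq_abs]

theorem norm_sum_range_exp_I_mul (M : ℕ) {φ : ℝ} (hφ : Real.sin φ ≠ 0) :
    ‖∑ m ∈ Finset.range M, exp (I * ((m * (2 * φ) : ℝ) : ℂ))‖
      = |Real.sin (M * φ) / Real.sin φ| := by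
  set z := exp (I * ((2 * φ : ℝ) : ℂ))
  have hpow : ∀ m : ℕ, z ^ m = exp (I * ((2 * (m * φ) : ℝ) : ℂ)) := fun m ↦ by
    rw [← exp_nat_mul]
    push_cast
    ring_nf
  have hterms : ∀ m : ℕ, exp (I * ((m * (2 * φ) : ℝ) : ℂ)) = z ^ m := fun m ↦ by
    rw [hpow]
    ring_nf
  have hnorm := congrArg norm (geom_sum_mul z M)
  rw [norm_mul, hpow, norm_exp_I_mul_two_mul_sub_one, norm_exp_I_mul_two_mul_sub_one] at hnorm
  simp_rw [hterms]
  rw [eq_div_of_mul_eq (by positivity) hnorm, abs_div]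
  field_simp

section Uniform

variable {D : ℝ}

lemma isProbabilityMeasure_uniformIcc (hD : 0 < D) : IsProbabilityMeasure (uniformIcc D) := by
  constructor
  simp [uniformIcc, ENNReal.inv_mul_cancel, hD]

lemma integral_uniformIcc {E : Type*} [NormedAddCommGroup E] [NormedSpace ℝ E] (hD : 0 ≤ D)
    (f : ℝ → E) : ∫ x, f x ∂uniformIcc D = D⁻¹ • ∫ x in 0..D, f x := by
  rw [uniformIcc, integral_smul_measure, intervalIntegral.integral_of_le hD,
    integral_Icc_eq_integral_Ioc, ENNReal.toReal_inv, ENNReal.toReal_ofReal hD]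

lemma charFun_uniformIcc (hD : 0 < D) {t : ℝ} (ht : t ≠ 0) :
    charFun (uniformIcc D) t = (exp (I * (t * D : ℝ)) - 1) / (I * (t * D : ℝ)) := by
  have htI : (t : ℂ) * I ≠ 0 := by simp [ht]
  have hD' : (D : ℂ) ≠ 0 := by exact_mod_cast hD.ne'
  rw [charFun_apply_real, integral_uniformIcc hD.le]
  simp_rw [mul_right_comm _ _ I]
  rw [integral_exp_mul_complex htI, Complex.real_smul]
  push_cast
  rw [mul_zero, exp_zero]
  field_simp

lemma norm_charFun_uniformIcc (hD : 0 < D) (t : ℝ) :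
    ‖charFun (uniformIcc D) t‖ = |Real.sinc (t * D / 2)| := by
  rcases eq_or_ne t 0 with rfl | ht
  · have := isProbabilityMeasure_uniformIcc hD
    simp
  have htD : t * D / 2 ≠ 0 := by positivity
  rw [charFun_uniformIcc hD ht, norm_div, norm_exp_I_mul_ofReal_sub_one, Real.sinc_of_ne_zero htD]
  simp only [norm_mul, norm_I, one_mul, Real.norm_ofNat, Real.norm_eq_abs, Complex.norm_real,
    abs_div, abs_mul, abs_two]
  field_simp

end Uniform

section SecondMoment

variable {Ω : Type*} [MeasurableSpace Ω] {P : Measure Ω}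

lemma ProbabilityTheory.IndepFun.integral_mul_conj {X Y : Ω → ℂ} (hXY : IndepFun X Y P)
    (hX : AEStronglyMeasurable X P) (hY : AEStronglyMeasurable Y P) :
    ∫ ω, X ω * conj (Y ω) ∂P = P[X] * conj P[Y] := by
  have h := (hXY.comp measurable_id Complex.continuous_conj.measurable
    ).integral_fun_mul_eq_mul_integral hX hY.star
  simpa only [Function.comp_def, id, integral_conj] using h

theorem integral_norm_sum_sq_of_pairwise_indepFun [IsProbabilityMeasure P] {ι : Type*}
    [Fintype ι] {X : ι → Ω → ℂ} (hX : ∀ i, AEStronglyMeasurable (X i) P)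
    (hindep : Pairwise fun i j ↦ IndepFun (X i) (X j) P) (hnorm : ∀ i ω, ‖X i ω‖ = 1) {c : ℂ}
    (hmean : ∀ i, P[X i] = c) :
    ∫ ω, ‖∑ i, X i ω‖ ^ 2 ∂P
      = Fintype.card ι + Fintype.card ι * (Fintype.card ι - 1) * ‖c‖ ^ 2 := by
  classical
  have hint : ∀ i j, Integrable (fun ω ↦ X i ω * conj (X j ω)) P := fun i j ↦
    .of_bound ((hX i).mul (hX j).star) 1 (.of_forall fun ω ↦ by simp [hnorm])
  have hterm : ∀ i j, ∫ ω, X i ω * conj (X j ω) ∂P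
      = (‖c‖ : ℂ) ^ 2 + if i = j then 1 - (‖c‖ : ℂ) ^ 2 else 0 := by
    intro i j
    split_ifs with hij
    · subst hij
      simp [mul_conj', hnorm]
    · rw [(hindep hij).integral_mul_conj (hX i) (hX j), hmean, hmean, mul_conj', add_zero]
  apply Complex.ofReal_injective
  calc ((∫ ω, ‖∑ i, X i ω‖ ^ 2 ∂P : ℝ) : ℂ)
      = ∑ i, ∑ j, ∫ ω, X i ω * conj (X j ω) ∂P := by
        rw [← integral_complex_ofReal]
        simp_rw [Complex.ofReal_pow, ← mul_conj', map_sum, Finset.sum_mul_sum]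
        rw [integral_finsetSum _ fun i _ ↦ integrable_finsetSum _ fun j _ ↦ hint i j]
        exact Finset.sum_congr rfl fun i _ ↦ integral_finsetSum _ fun j _ ↦ hint i j
    _ = _ := by
        simp only [hterm, Finset.sum_add_distrib, Finset.sum_ite_eq, Finset.mem_univ, if_true,
          Finset.sum_const, Finset.card_univ, nsmul_eq_mul]
        push_cast
        ring

theorem integral_norm_sum_exp_I_mul_sq [IsProbabilityMeasure P] {ι : Type*} [Fintype ι]
    {ξ : ι → Ω → ℝ} (hξ : ∀ i, Measurable (ξ i))
    (hindep : Pairwise fun i j ↦ IndepFun (ξ i) (ξ j) P) {μ : Measure ℝ}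
    (hlaw : ∀ i, P.map (ξ i) = μ) (t : ℝ) :
    ∫ ω, ‖∑ i, exp (I * ((t * ξ i ω : ℝ) : ℂ))‖ ^ 2 ∂P
      = Fintype.card ι + Fintype.card ι * (Fintype.card ι - 1) * ‖charFun μ t‖ ^ 2 := by
  have he : Measurable fun x : ℝ ↦ exp (I * ((t * x : ℝ) : ℂ)) := by fun_prop
  refine integral_norm_sum_sq_of_pairwise_indepFun
    (X := fun i ω ↦ exp (I * ((t * ξ i ω : ℝ) : ℂ)))
    (fun i ↦ (he.comp (hξ i)).aestronglyMeasurable) (fun i j hij ↦ (hindep hij).comp he he)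
    (fun i ω ↦ norm_exp_I_mul_ofReal _) fun i ↦ ?_
  rw [← hlaw i, charFun_apply_real, integral_map (hξ i).aemeasurable (by fun_prop)]
  congr with ω
  congr 1
  push_cast
  ring

end SecondMoment

lemma sum_sum_exp_I_mul_add {ι κ : Type*} (s : Finset ι) (t : Finset κ) (x : ι → ℝ)
    (y : κ → ℝ) :
    ∑ i ∈ s, ∑ j ∈ t, exp (I * ((x i + y j : ℝ) : ℂ))
      = (∑ i ∈ s, exp (I * (x i : ℂ))) * ∑ j ∈ t, exp (I * (y j : ℂ)) := by
  simp_rw [Finset.sum_mul_sum, ofReal_add, mul_add, exp_add]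

theorem expectation_sq_abs_corr_coeff_general
    {Ω : Type*} [MeasurableSpace Ω] (P : Measure Ω) [IsProbabilityMeasure P]
    (K M : ℕ) (hK : 0 < K)
    (D lam d u : ℝ) (hD : 0 < D)
    (hρ : Real.pi * D / lam * u ≠ 0)
    (hφ : Real.sin (Real.pi * d / lam * u) ≠ 0)
    (ξ : Fin K → Ω → ℝ) (hmeas : ∀ k, Measurable (ξ k))
    (hindep : iIndepFun ξ P)
    (hlaw : ∀ k, Measure.map (ξ k) P = uniformIcc D) :
    (∫ ω, (‖(1 / ((K : ℂ) * (M : ℂ))) *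
        ∑ k : Fin K, ∑ m ∈ Finset.range M,
          Complex.exp (Complex.I * ((2 * Real.pi / lam * (ξ k ω + (m : ℝ) * d) * u : ℝ) : ℂ))‖) ^ 2 ∂P)
      = (Real.sin ((M : ℝ) * (Real.pi * d / lam * u))
            / ((M : ℝ) * Real.sin (Real.pi * d / lam * u))) ^ 2
        * (1 / (K : ℝ) + (1 - 1 / (K : ℝ))
            * (Real.sin (Real.pi * D / lam * u) / (Real.pi * D / lam * u)) ^ 2) := by
  set φ := Real.pi * d / lam * u
  set ρ := Real.pi * D / lam * u
  set a := 2 * Real.pi / lam * u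
  have hphase : ∀ ω k (m : ℕ),
      2 * Real.pi / lam * (ξ k ω + m * d) * u = a * ξ k ω + m * (2 * φ) := fun _ _ _ ↦ by ring
  simp_rw [hphase, sum_sum_exp_I_mul_add, norm_mul, mul_pow]
  rw [integral_const_mul, integral_mul_const,
    integral_norm_sum_exp_I_mul_sq hmeas (fun i j hij ↦ hindep.indepFun hij) hlaw,
    norm_charFun_uniformIcc hD, norm_sum_range_exp_I_mul M hφ, show a * D / 2 = ρ by ring,
    Real.sinc_of_ne_zero hρ, Fintype.card_fin, sq_abs, sq_abs]
  simp only [norm_div, norm_one, norm_mul, Complex.norm_natCast]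
  field_simp

/-- Proposition 3 (second part): for i.i.d. subarray positions uniform on `[0,D]`,
`E[|G|²] = |M|²·(1/K + (1 − 1/K)(sin ρ/ρ)²)` where `M = sin(M̄φ)/(M̄ sin φ)`,
`φ = (π d/λ)u`, `ρ = (π D/λ)u`. -/
theorem expectation_sq_abs_corr_coeff
    {Ω : Type*} [MeasurableSpace Ω] (P : Measure Ω) [IsProbabilityMeasure P]
    (K M : ℕ) (hK : 0 < K) (hM : 0 < M)
    (D lam d u : ℝ) (hD : 0 < D) (hlam : 0 < lam) (hd : 0 < d)
    (hρ : Real.pi * D / lam * u ≠ 0)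
    (hφ : Real.sin (Real.pi * d / lam * u) ≠ 0)
    (ξ : Fin K → Ω → ℝ) (hmeas : ∀ k, Measurable (ξ k))
    (hindep : iIndepFun ξ P)
    (hlaw : ∀ k, Measure.map (ξ k) P = uniformIcc D) :
    (∫ ω, (‖(1 / ((K : ℂ) * (M : ℂ))) *
        ∑ k : Fin K, ∑ m ∈ Finset.range M,
          Complex.exp (Complex.I * ((2 * Real.pi / lam * (ξ k ω + (m : ℝ) * d) * u : ℝ) : ℂ))‖) ^ 2 ∂P)
      = (Real.sin ((M : ℝ) * (Real.pi * d / lam * u))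
            / ((M : ℝ) * Real.sin (Real.pi * d / lam * u))) ^ 2
        * (1 / (K : ℝ) + (1 - 1 / (K : ℝ))
            * (Real.sin (Real.pi * D / lam * u) / (Real.pi * D / lam * u)) ^ 2) :=
  expectation_sq_abs_corr_coeff_general P K M hK D lam d u hD hρ hφ ξ hmeas hindep hlaw
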